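/- arXiv:1901.00315 — 2 statements merged into one kernel-verified Lean document; each statement's English description precedes it below -/
import Mathlib

section
/- Let x ∈ C^ν(I, ℝ^m) be ν-Hölder continuous on a compact interval I. Fix α ∈ (0, ν) and γ ∈ (0,1), and define greedy times τ₀ = min I, τ_{i+1} = inf{ t > τ_i : ⦀x⦀_{α,[τ_i,t]} = γ } ∧ max I, and let N = sup{ i : τ_i < max I } be the number of greedy times. Then N ≤ |I| · γ^{-1/(ν-α)} · (⦀x⦀_{ν,I})^{1/(ν-α)}, where |I| = max I − min I. -/
/-- The `α`-Hölder seminorm of a path `x` on the interval `[s, t]`: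
`sup_{s ≤ u < v ≤ t} ‖x v - x u‖ / (v - u) ^ α`. -/
noncomputable def holderSemi {E : Type*} [NormedAddCommGroup E]
    (α s t : ℝ) (x : ℝ → E) : ℝ :=
  sSup {r : ℝ | ∃ u v, s ≤ u ∧ u < v ∧ v ≤ t ∧ r = ‖x v - x u‖ / (v - u) ^ α}

/-!
On a greedy interval `[τ i, τ (i+1)]` of length `δ`, the `ν`-Hölder bound gives
`γ = ⦀x⦀_{α,[τ i, τ (i+1)]} ≤ ⦀x⦀_{ν} δ^(ν-α)`, i.e. every greedy interval has length at least
`(γ / ⦀x⦀_{ν})^(1/(ν-α))`. The first `N` greedy intervals are disjoint subintervals of `[a, b]`,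
so their lengths add up to at most `b - a`.
-/

open Real

section HolderSemi

variable {E : Type*} [NormedAddCommGroup E]

theorem holderSemi_nonneg (α s t : ℝ) (x : ℝ → E) : 0 ≤ holderSemi α s t x := by
  apply Real.sSup_nonneg
  rintro r ⟨u, v, -, huv, -, rfl⟩
  exact div_nonneg (norm_nonneg _) (rpow_nonneg (sub_nonneg.2 huv.le) _)

theorem lt_of_holderSemi_pos {α s t : ℝ} {x : ℝ → E} (h : 0 < holderSemi α s t x) : s < t := by
  by_contra! hts
  have hempty : {r : ℝ | ∃ u v, s ≤ u ∧ u < v ∧ v ≤ t ∧ r = ‖x v - x u‖ / (v - u) ^ α} = ∅ :=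
    Set.eq_empty_of_forall_notMem fun r ⟨u, v, hsu, huv, hvt, _⟩ => by linarith
  rw [holderSemi, hempty, Real.sSup_empty] at h
  exact h.false

theorem holderSemi_le_mul_rpow_sub {α ν s t M : ℝ} {x : ℝ → E} (hαν : α ≤ ν) (hM : 0 ≤ M)
    (hst : s ≤ t) (hx : ∀ u v, s ≤ u → u ≤ v → v ≤ t → ‖x v - x u‖ ≤ M * (v - u) ^ ν) :
    holderSemi α s t x ≤ M * (t - s) ^ (ν - α) := by
  refine Real.sSup_le ?_ (mul_nonneg hM (rpow_nonneg (sub_nonneg.2 hst) _))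
  rintro r ⟨u, v, hsu, huv, hvt, rfl⟩
  have hvu : 0 < v - u := sub_pos.2 huv
  calc ‖x v - x u‖ / (v - u) ^ α
      ≤ M * (v - u) ^ ν / (v - u) ^ α :=
        div_le_div_of_nonneg_right (hx u v hsu huv.le hvt) (rpow_nonneg hvu.le _)
    _ = M * (v - u) ^ (ν - α) := by rw [mul_div_assoc, ← rpow_sub hvu]
    _ ≤ M * (t - s) ^ (ν - α) := by gcongr

end HolderSemi

theorem rpow_inv_le_mul_of_le_mul_rpow {p γ M δ : ℝ} (hp : 0 < p) (hγ : 0 ≤ γ) (hM : 0 ≤ M)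
    (hδ : 0 ≤ δ) (h : γ ≤ M * δ ^ p) : γ ^ p⁻¹ ≤ δ * M ^ p⁻¹ := by
  calc γ ^ p⁻¹ ≤ (M * δ ^ p) ^ p⁻¹ := rpow_le_rpow hγ h (inv_nonneg.2 hp.le)
    _ = δ * M ^ p⁻¹ := by
      rw [mul_rpow hM (rpow_nonneg hδ _), ← rpow_mul hδ, mul_inv_cancel₀ hp.ne', rpow_one,
        mul_comm]

theorem nsmul_le_sub_mul_of_forall_le_sub_mul {R : Type*} [Ring R] [PartialOrder R]
    [IsOrderedAddMonoid R] {c K : R} {τ : ℕ → R} {N : ℕ}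
    (h : ∀ i < N, c ≤ (τ (i + 1) - τ i) * K) : N • c ≤ (τ N - τ 0) * K := by
  calc N • c = ∑ i ∈ Finset.range N, c := by rw [Finset.sum_const, Finset.card_range]
    _ ≤ ∑ i ∈ Finset.range N, (τ (i + 1) - τ i) * K :=
        Finset.sum_le_sum fun i hi => h i (Finset.mem_range.1 hi)
    _ = (τ N - τ 0) * K := by rw [← Finset.sum_mul, Finset.sum_range_sub]

theorem greedy_times_bound_general {m : ℕ} (a b ν α γ : ℝ)
    (hαν : α < ν) (hγ0 : 0 < γ)
    (x : ℝ → EuclideanSpace ℝ (Fin m))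
    (hx : ∀ u v, a ≤ u → u ≤ v → v ≤ b → ‖x v - x u‖ ≤ holderSemi ν a b x * (v - u) ^ ν)
    (τ : ℕ → ℝ) (hτ0 : τ 0 = a) (hmono : Monotone τ) (hτb : ∀ i, τ i ≤ b)
    (hgreedy : ∀ i, τ (i + 1) < b → holderSemi α (τ i) (τ (i + 1)) x = γ)
    (N : ℕ) (hN : τ N < b) :
    (N : ℝ) ≤ (b - a) * γ ^ (-(ν - α)⁻¹) * holderSemi ν a b x ^ (ν - α)⁻¹ := by
  set M := holderSemi ν a b x
  have hM : 0 ≤ M := holderSemi_nonneg ν a b x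
  have hstep : ∀ i < N, γ ^ (ν - α)⁻¹ ≤ (τ (i + 1) - τ i) * M ^ (ν - α)⁻¹ := by
    intro i hi
    have hgreedy_i := hgreedy i ((hmono hi).trans_lt hN)
    have hlt : τ i < τ (i + 1) := lt_of_holderSemi_pos (hgreedy_i ▸ hγ0)
    refine rpow_inv_le_mul_of_le_mul_rpow (sub_pos.2 hαν) hγ0.le hM (sub_nonneg.2 hlt.le) ?_
    rw [← hgreedy_i]
    refine holderSemi_le_mul_rpow_sub hαν.le hM hlt.le fun u v hu huv hv => hx u v ?_ huv ?_
    · exact hτ0 ▸ (hmono (Nat.zero_le i)).trans hu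
    · exact hv.trans (hτb _)
  have hsum := nsmul_le_sub_mul_of_forall_le_sub_mul hstep
  rw [nsmul_eq_mul, hτ0] at hsum
  have hγe : 0 < γ ^ (ν - α)⁻¹ := rpow_pos_of_pos hγ0 _
  rw [rpow_neg hγ0.le, mul_right_comm, ← div_eq_mul_inv, le_div_iff₀ hγe]
  exact hsum.trans (mul_le_mul_of_nonneg_right (by linarith) (rpow_nonneg hM _))

/-- Bound on the number of greedy times for the `α`-Hölder seminorm of a
`ν`-Hölder path: if `τ 0 = a`, `τ` is monotone, stays in `[a, b]`, and
`⦀x⦀_{α,[τ i, τ (i+1)]} = γ` whenever `τ (i+1) < b`, then the number `N` of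
greedy times satisfies `N ≤ (b - a) γ^{-1/(ν-α)} ⦀x⦀_{ν,[a,b]}^{1/(ν-α)}`. -/
theorem greedy_times_bound {m : ℕ} (a b ν α γ : ℝ) (hab : a ≤ b)
    (hα : 0 < α) (hαν : α < ν) (hν : ν ≤ 1) (hγ0 : 0 < γ) (hγ1 : γ < 1)
    (x : ℝ → EuclideanSpace ℝ (Fin m))
    (hx : ∀ u v, a ≤ u → u ≤ v → v ≤ b → ‖x v - x u‖ ≤ holderSemi ν a b x * (v - u) ^ ν)
    (τ : ℕ → ℝ) (hτ0 : τ 0 = a) (hmono : Monotone τ) (hτb : ∀ i, τ i ≤ b)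
    (hgreedy : ∀ i, τ (i + 1) < b → holderSemi α (τ i) (τ (i + 1)) x = γ)
    (N : ℕ) (hN : τ N < b) :
    (N : ℝ) ≤ (b - a) * γ ^ (-(ν - α)⁻¹) * holderSemi ν a b x ^ (ν - α)⁻¹ :=
  greedy_times_bound_general a b ν α γ hαν hγ0 x hx τ hτ0 hmono hτb hgreedy N hN
end

section
/- Let H: ℝ₊ → ℝ₊ be a continuous increasing function, ε > 0, and δ > 0 such that H(δ e^{c}) + c < H(0) + ε where c = C_g κ₂(δ) ≥ 0. Suppose z: [m, m+1] → ℝ is continuous with z_t ≤ z_m + c + ∫_m^t [H(e^{z_s}) − (H(0)+ε)] ds for all t ∈ [m, m+1], and z_m < log δ. Then z_t < log δ + c for all t ∈ [m, m+1], and z_{m+1} ≤ z_m − [H(0) + ε − H(δ e^{c}) − c] < z_m < log δ. -/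
/-!
As long as `z < log δ + c`, monotonicity of `H` makes the integrand at most
`H(δ e^c) − (H(0)+ε) < 0`, so the integral inequality forces `z_t ≤ z_m + c`, strictly below the
barrier `log δ + c`. Hence the first time `z` reaches the barrier (which exists by compactness if it
is ever reached) cannot exist, and evaluating the same estimate at `t = m + 1` gives the decay.
-/

open Set Real

theorem ContinuousOn.forall_lt_of_forall_Ico_lt {f : ℝ → ℝ} {a b L : ℝ}
    (hf : ContinuousOn f (Icc a b))
    (hstep : ∀ t ∈ Icc a b, (∀ s ∈ Ico a t, f s < L) → f t < L) :
    ∀ t ∈ Icc a b, f t < L := by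
  by_contra! hex
  have hclosed : IsClosed (Icc a b ∩ f ⁻¹' Ici L) :=
    hf.preimage_isClosed_of_isClosed isClosed_Icc isClosed_Ici
  obtain ⟨t₀, ⟨ht₀, hLt₀⟩, hleast⟩ :=
    (isCompact_Icc.of_isClosed_subset hclosed inter_subset_left).exists_isLeast hex
  have hbefore : ∀ s ∈ Ico a t₀, f s < L := fun s hs => by
    by_contra! hLs
    exact (hleast ⟨⟨hs.1, hs.2.le.trans ht₀.2⟩, hLs⟩).not_gt hs.2
  exact (hstep t₀ ht₀ hbefore).not_ge hLt₀

theorem le_sub_mul_of_forall_Ioo_lt_log_add {H z : ℝ → ℝ} {c δ μ m t : ℝ}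
    (hHc : Continuous H) (hHmono : Monotone H) (hδ : 0 < δ) (hmt : m ≤ t)
    (hzc : ContinuousOn z (Icc m t))
    (hz : z t ≤ z m + c + ∫ s in m..t, (H (exp (z s)) - μ))
    (hbelow : ∀ s ∈ Ioo m t, z s < log δ + c) :
    z t ≤ z m + c - (μ - H (δ * exp c)) * (t - m) := by
  have hint : IntervalIntegrable (fun s => H (exp (z s)) - μ) MeasureTheory.volume m t := by
    refine ContinuousOn.intervalIntegrable ?_
    rw [uIcc_of_le hmt]
    exact (hHc.comp_continuousOn (continuous_exp.comp_continuousOn hzc)).sub continuousOn_const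
  have hintegral : ∫ s in m..t, (H (exp (z s)) - μ) ≤ ∫ _ in m..t, (H (δ * exp c) - μ) := by
    refine intervalIntegral.integral_mono_on_of_le_Ioo hmt hint intervalIntegrable_const
      fun s hs => sub_le_sub_right (hHmono ?_) μ
    calc exp (z s) ≤ exp (log δ + c) := exp_le_exp.2 (hbelow s hs).le
      _ = δ * exp c := by rw [exp_add, exp_log hδ]
  rw [intervalIntegral.integral_const, smul_eq_mul] at hintegral
  linarith

theorem local_stability_bootstrap_general (H : ℝ → ℝ) (hHc : Continuous H)
    (hHmono : Monotone H) (c ε δ m : ℝ) (hc : 0 ≤ c) (hδ : 0 < δ)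
    (hkey : H (δ * Real.exp c) + c < H 0 + ε)
    (z : ℝ → ℝ) (hzc : ContinuousOn z (Set.Icc m (m + 1)))
    (hz : ∀ t ∈ Set.Icc m (m + 1),
      z t ≤ z m + c + ∫ s in m..t, (H (Real.exp (z s)) - (H 0 + ε)))
    (hm : z m < Real.log δ) :
    (∀ t ∈ Set.Icc m (m + 1), z t < Real.log δ + c) ∧
    z (m + 1) ≤ z m - (H 0 + ε - H (δ * Real.exp c) - c) ∧
    z (m + 1) < z m := by
  have hgap : 0 < H 0 + ε - H (δ * exp c) := by linarith
  have hdecay : ∀ t ∈ Icc m (m + 1), (∀ s ∈ Ioo m t, z s < log δ + c) →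
      z t ≤ z m + c - (H 0 + ε - H (δ * exp c)) * (t - m) := fun t ht hbelow =>
    le_sub_mul_of_forall_Ioo_lt_log_add hHc hHmono hδ ht.1
      (hzc.mono (Icc_subset_Icc_right ht.2)) (hz t ht) hbelow
  have hbarrier : ∀ t ∈ Icc m (m + 1), z t < log δ + c :=
    hzc.forall_lt_of_forall_Ico_lt fun t ht hbelow => by
      have := hdecay t ht fun s hs => hbelow s (Ioo_subset_Ico_self hs)
      linarith [mul_nonneg hgap.le (sub_nonneg.2 ht.1)]
  have hend := hdecay (m + 1) (right_mem_Icc.2 (by linarith))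
    fun s hs => hbarrier s (Ioo_subset_Icc_self hs)
  rw [add_sub_cancel_left, mul_one] at hend
  exact ⟨hbarrier, by linarith, by linarith⟩

/-- Continuous bootstrap argument of the local stability lemma: if `H` is
continuous and increasing, `c ≥ 0`, `ε > 0`, `δ > 0` with
`H(δ e^c) + c < H(0) + ε`, `z` is continuous on `[m, m+1]` with
`z_t ≤ z_m + c + ∫_m^t (H(e^{z_s}) − (H(0)+ε)) ds` and `z_m < log δ`, then
`z_t < log δ + c` on `[m, m+1]` and
`z_{m+1} ≤ z_m − (H(0) + ε − H(δ e^c) − c) < z_m`. -/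
theorem local_stability_bootstrap (H : ℝ → ℝ) (hHc : Continuous H)
    (hHmono : Monotone H) (c ε δ m : ℝ) (hc : 0 ≤ c) (hε : 0 < ε) (hδ : 0 < δ)
    (hkey : H (δ * Real.exp c) + c < H 0 + ε)
    (z : ℝ → ℝ) (hzc : ContinuousOn z (Set.Icc m (m + 1)))
    (hz : ∀ t ∈ Set.Icc m (m + 1),
      z t ≤ z m + c + ∫ s in m..t, (H (Real.exp (z s)) - (H 0 + ε)))
    (hm : z m < Real.log δ) :
    (∀ t ∈ Set.Icc m (m + 1), z t < Real.log δ + c) ∧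
    z (m + 1) ≤ z m - (H 0 + ε - H (δ * Real.exp c) - c) ∧
    z (m + 1) < z m :=
  local_stability_bootstrap_general H hHc hHmono c ε δ m hc hδ hkey z hzc hz hm
end
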